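/- arXiv:1709.09760 — 6 statements merged into one kernel-verified Lean document; each statement's English description precedes it below -/
import Mathlib

section
/- For all r, s ∈ F^* and a, b, c, d ∈ F, the matrices satisfy the multiplication law M(r;a,b)·M(s;c,d) = M(rs; as + c, b·s^(ω+1) + d + a·c^ω·s). -/
open Matrix

noncomputable section

abbrev F (n : ℕ) : Type := GaloisField 2 (2 * n + 1)

def om (n : ℕ) : ℕ := 2 ^ (n + 1)

def ff (n : ℕ) (x y : F n) : F n := x ^ (om n + 2) + x * y + y ^ om n

def Mmat (n : ℕ) (r a b : F n) : Matrix (Fin 4) (Fin 4) (F n) :=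
  !![1, ff n a b, a, b;
     0, r ^ (om n + 2), 0, 0;
     0, (a ^ (om n + 1) + b) * r, r, a ^ om n * r;
     0, a * r ^ (om n + 1), 0, r ^ (om n + 1)]

lemma pow_card' (n : ℕ) (x : F n) : x ^ (2^(2*n+1)) = x := by
  have : Fintype (F n) := Fintype.ofFinite _
  rw [← GaloisField.card 2 (2*n+1) (by omega), Nat.card_eq_fintype_card]
  exact FiniteField.pow_card x

lemma frob (n : ℕ) (x y : F n) : (x+y)^om n = x^om n + y^om n := by
  rw [om]; exact add_pow_char_pow x y 2 (n+1)

lemma two0 (n : ℕ) : (2 : F n) = 0 := by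
  have := CharP.cast_eq_zero (F n) 2; exact_mod_cast this

lemma omom (n : ℕ) (x : F n) : (x ^ om n)^ om n = x^2 := by
  rw [← pow_mul, om, ← pow_add]
  have h : (n+1) + (n+1) = (2*n+1) + 1 := by ring
  rw [h, pow_succ, pow_mul, pow_card']

lemma key1 (n : ℕ) (a b c d s : F n) :
    ff n (a*s+c) (b * s^(om n+1) + d + a*c^(om n)*s)
    = ff n c d + ff n a b * s ^ (om n + 2) + a*((c^(om n+1)+d)*s) + b*(c*s^(om n+1)) := by
  have h2 := two0 n
  have hA : (a*s+c)^(om n) = a^om n * s^om n + c^om n := by rw [frob, mul_pow]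
  have hs1 : (s^(om n+1))^(om n) = s^2 * s^(om n) := by rw [pow_succ, mul_pow, omom]
  have hc1 : (c^(om n))^(om n) = c^2 := omom n c
  have hB : (b * s^(om n+1) + d + a*c^(om n)*s)^(om n)
      = b^om n * (s^2 * s^om n) + d^om n + a^om n * c^2 * s^om n := by
    rw [frob, frob, mul_pow, mul_pow, mul_pow, hs1, hc1]
  simp only [ff]
  rw [hB]
  simp only [pow_add, pow_one]
  rw [hA]
  linear_combination (a * a^om n * s * s^om n * c + a * s * c * c^om n + a^2 * s^2 * c^om n + a^om n * s^om n * c^2) * h2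

lemma key2 (n : ℕ) (a b c d r s : F n) :
    ((a*s+c)^(om n+1) + (b * s^(om n+1) + d + a*c^(om n)*s)) * (r*s)
    = (a^(om n+1)+b)*r * s^(om n+2) + (c^(om n+1)+d)*s*r + a^(om n)*r*(c*s^(om n+1)) := by
  have h2 := two0 n
  have hA : (a*s+c)^(om n) = a^om n * s^om n + c^om n := by rw [frob, mul_pow]
  simp only [pow_succ, pow_add, pow_one]
  rw [hA]
  linear_combination (a*c^(om n)*s*r*s) * h2

theorem mul_law (n : ℕ) (hn : 1 ≤ n) (r s : F n) (hr : r ≠ 0) (hs : s ≠ 0) (a b c d : F n) :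
    Mmat n r a b * Mmat n s c d =
      Mmat n (r * s) (a * s + c) (b * s ^ (om n + 1) + d + a * c ^ om n * s) := by
  have h2 := two0 n
  have hA : (a*s+c)^(om n) = a^om n * s^om n + c^om n := by rw [frob, mul_pow]
  have hA' : (c+s*a)^(om n) = c^om n + s^om n * a^om n := by rw [frob, mul_pow]
  have k1 := key1 n a b c d s
  ext i j
  fin_cases i <;> fin_cases j <;>
    simp [Mmat, Matrix.mul_apply, Fin.sum_univ_four, Matrix.vecHead, Matrix.vecTail] <;>
    try ring
  · rw [(by ring : (s*a+c : F n) = a*s+c),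
        (by ring : (s*s^om n*b + s*a*c^om n + d : F n) = b*s^(om n+1)+d+a*c^om n*s)]
    linear_combination -k1
  · linear_combination (-(a*r*s^2)-r*s*c)*hA - (a*r*s^2*c^om n)*h2
  · linear_combination (-(r*s))*hA'
end
end

section
/- The set G = {M(r;a,b) : r ∈ F^*, a, b ∈ F} is a subgroup of GL(4,F): it is closed under matrix multiplication, every M(r;a,b) is invertible with its inverse again of the form M(r';a',b'), and G has exactly q^2·(q−1) elements. -/
open Matrix

noncomputable section

/-- The set `G = {M(r;a,b) : r ∈ F^*, a b ∈ F}`. -/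
def Gset (n : ℕ) : Set (Matrix (Fin 4) (Fin 4) (F n)) :=
  {A | ∃ r a b : F n, r ≠ 0 ∧ A = Mmat n r a b}

/-!
Entrywise, `M(r;a,b) · M(s;c,d) = M(rs; as + c, d + a c^ω s + b s^(ω+1))`: the computation only
uses that `x ↦ x^ω` is a power of Frobenius, hence additive, and that `x^(ω²) = x²` because
`ω² = 2q`. So `G` is closed under products, and since `M(1;0,0) = 1` and `x + x = 0` the inverse
of `M(r;a,b)` is again of this form. The parameters `r, a, b` are the entries `(2,2), (0,2), (0,3)`,
so `|G| = |F^*| · |F|²`.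
-/

lemma add_pow_om (n : ℕ) (x y : F n) : (x + y) ^ om n = x ^ om n + y ^ om n :=
  add_pow_char_pow ..

lemma natCard_F (n : ℕ) : Nat.card (F n) = 2 ^ (2 * n + 1) :=
  GaloisField.card 2 _ (by omega)

lemma pow_om_pow_om (n : ℕ) (x : F n) : (x ^ om n) ^ om n = x ^ 2 := by
  let : Fintype (F n) := Fintype.ofFinite _
  have hω : om n * om n = Fintype.card (F n) * 2 := by
    rw [Fintype.card_eq_nat_card, natCard_F, om, ← pow_add, ← pow_succ]; ring_nf
  rw [← pow_mul, hω, pow_mul, FiniteField.pow_card]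

lemma Mmat_mul (n : ℕ) (r a b s c d : F n) :
    Mmat n r a b * Mmat n s c d
      = Mmat n (r * s) (a * s + c) (d + a * c ^ om n * s + b * s ^ (om n + 1)) := by
  -- `reduce_mod_char!` reads the characteristic off a local hypothesis
  have : CharP (F n) 2 := inferInstance
  ext i j
  fin_cases i <;> fin_cases j <;>
    simp [Mmat, mul_apply, ff, Fin.sum_univ_four, pow_add, add_pow_om, mul_pow, pow_om_pow_om] <;>
    ring_nf <;> reduce_mod_char!

lemma Mmat_one_zero_zero (n : ℕ) : Mmat n 1 0 0 = 1 := by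
  ext i j
  fin_cases i <;> fin_cases j <;> simp [Mmat, ff, om, one_apply]

lemma Mmat_mul_Mmat_inv {n : ℕ} {r : F n} (hr : r ≠ 0) (a b : F n) :
    Mmat n r a b * Mmat n r⁻¹ (a * r⁻¹) (a * (a * r⁻¹) ^ om n * r⁻¹ + b * r⁻¹ ^ (om n + 1)) = 1 := by
  rw [Mmat_mul, mul_inv_cancel₀ hr, CharTwo.add_self_eq_zero, add_assoc (_ + _),
    CharTwo.add_self_eq_zero, Mmat_one_zero_zero]

lemma Mmat_inj {n : ℕ} {r a b s c d : F n} :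
    Mmat n r a b = Mmat n s c d ↔ r = s ∧ a = c ∧ b = d := by
  refine ⟨fun h ↦ ⟨?_, ?_, ?_⟩, by rintro ⟨rfl, rfl, rfl⟩; rfl⟩
  · simpa [Mmat] using congr_fun₂ h 2 2
  · simpa [Mmat] using congr_fun₂ h 0 2
  · simpa [Mmat] using congr_fun₂ h 0 3

lemma Gset_eq_range (n : ℕ) :
    Gset n = Set.range (fun p : (F n)ˣ × F n × F n ↦ Mmat n p.1 p.2.1 p.2.2) := by
  ext A
  constructor
  · rintro ⟨r, a, b, hr, rfl⟩
    exact ⟨(Units.mk0 r hr, a, b), rfl⟩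
  · rintro ⟨⟨u, a, b⟩, rfl⟩
    exact ⟨u, a, b, u.ne_zero, rfl⟩

lemma natCard_Gset (n : ℕ) :
    Nat.card (Gset n) = (2 ^ (2 * n + 1)) ^ 2 * (2 ^ (2 * n + 1) - 1) := by
  have hinj : Function.Injective (fun p : (F n)ˣ × F n × F n ↦ Mmat n p.1 p.2.1 p.2.2) := by
    rintro ⟨u, a, b⟩ ⟨v, c, d⟩ h
    simp only [Mmat_inj, Units.val_inj] at h
    obtain ⟨rfl, rfl, rfl⟩ := h
    rfl
  rw [Gset_eq_range, Nat.card_range_of_injective hinj, Nat.card_prod, Nat.card_prod,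
    Nat.card_units, natCard_F]
  ring

theorem Gset_subgroup_general (n : ℕ) :
    (∀ A ∈ Gset n, ∀ B ∈ Gset n, A * B ∈ Gset n) ∧
    (∀ r : F n, r ≠ 0 → ∀ a b : F n, IsUnit (Mmat n r a b) ∧
      ∃ r' a' b' : F n, r' ≠ 0 ∧ Mmat n r a b * Mmat n r' a' b' = 1 ∧
        Mmat n r' a' b' * Mmat n r a b = 1) ∧
    Nat.card (Gset n) = (2 ^ (2 * n + 1)) ^ 2 * (2 ^ (2 * n + 1) - 1) := by
  refine ⟨?_, fun r hr a b ↦ ?_, natCard_Gset n⟩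
  · rintro A ⟨r, a, b, hr, rfl⟩ B ⟨s, c, d, hs, rfl⟩
    exact ⟨_, _, _, mul_ne_zero hr hs, Mmat_mul ..⟩
  · have h := Mmat_mul_Mmat_inv hr a b
    exact ⟨IsUnit.of_mul_eq_one _ h, _, _, _, inv_ne_zero hr, h, mul_eq_one_comm.mp h⟩

theorem Gset_subgroup (n : ℕ) (hn : 1 ≤ n) :
    (∀ A ∈ Gset n, ∀ B ∈ Gset n, A * B ∈ Gset n) ∧
    (∀ r : F n, r ≠ 0 → ∀ a b : F n, IsUnit (Mmat n r a b) ∧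
      ∃ r' a' b' : F n, r' ≠ 0 ∧ Mmat n r a b * Mmat n r' a' b' = 1 ∧
        Mmat n r' a' b' * Mmat n r a b = 1) ∧
    Nat.card (Gset n) = (2 ^ (2 * n + 1)) ^ 2 * (2 ^ (2 * n + 1) - 1) :=
  Gset_subgroup_general n
end
end

section
/- For every nonzero x ∈ F^4, with c = x0·x1 + x2·x3, the four vectors p1 = (0, c^(ω/2), x0^ω, x2^ω), p2 = (c^(ω/2), 0, x3^ω, x1^ω), p3 = (x0^ω, x3^ω, 0, c^(ω/2)), p4 = (x2^ω, x1^ω, c^(ω/2), 0) satisfy B(pi, pj) = 0 for all i, j ∈ {1,2,3,4}, and their linear span π[x] in F^4 has dimension exactly 2 (so π[x] is a totally isotropic line of PG(3,q)). -/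
open Matrix

noncomputable section

/-- The symplectic form `B(x,y) = x0·y1 + x1·y0 + x2·y3 + x3·y2`
(in characteristic 2 signs are irrelevant). -/
def Bform (n : ℕ) (x y : Fin 4 → F n) : F n :=
  x 0 * y 1 + x 1 * y 0 + x 2 * y 3 + x 3 * y 2

/-- The four spanning vectors of the polar line `π[x]`. -/
def polarGens (n : ℕ) (x : Fin 4 → F n) : Set (Fin 4 → F n) :=
  {![0, (x 0 * x 1 + x 2 * x 3) ^ 2 ^ n, x 0 ^ om n, x 2 ^ om n],
   ![(x 0 * x 1 + x 2 * x 3) ^ 2 ^ n, 0, x 3 ^ om n, x 1 ^ om n],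
   ![x 0 ^ om n, x 3 ^ om n, 0, (x 0 * x 1 + x 2 * x 3) ^ 2 ^ n],
   ![x 2 ^ om n, x 1 ^ om n, (x 0 * x 1 + x 2 * x 3) ^ 2 ^ n, 0]}

/-- The polar line `π[x]`, as a subspace of `F⁴`. -/
def polarSpan (n : ℕ) (x : Fin 4 → F n) : Submodule (F n) (Fin 4 → F n) :=
  Submodule.span (F n) (polarGens n x)

set_option linter.unreachableTactic false
set_option linter.unusedTactic false
set_option linter.unnecessarySeqFocus false
set_option linter.unusedSectionVars false
set_option maxHeartbeats 1000000

open Submodule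

section Aux

variable {K : Type} [Field K] [CharP K 2]

lemma aux_isotropic (c a b d e : K) (hkey : c*c = a*e + b*d) :
    ∀ p ∈ ({![0,c,a,b], ![c,0,d,e], ![a,d,0,c], ![b,e,c,0]} : Set (Fin 4 → K)),
    ∀ p' ∈ ({![0,c,a,b], ![c,0,d,e], ![a,d,0,c], ![b,e,c,0]} : Set (Fin 4 → K)),
    p 0 * p' 1 + p 1 * p' 0 + p 2 * p' 3 + p 3 * p' 2 = 0 := by
  have htwo : (2:K) = 0 := CharTwo.two_eq_zero
  intro p hp p' hp'
  simp only [Set.mem_insert_iff, Set.mem_singleton_iff] at hp hp'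
  rcases hp with rfl|rfl|rfl|rfl <;> rcases hp' with rfl|rfl|rfl|rfl <;> simp <;>
    first
      | ring1
      | linear_combination hkey + (a*e+b*d)*htwo
      | linear_combination (a*b)*htwo
      | linear_combination (d*e)*htwo
      | linear_combination (a*d)*htwo
      | linear_combination (b*e)*htwo
      | linear_combination (a*c)*htwo
      | linear_combination (b*c)*htwo
      | linear_combination (c*d)*htwo
      | linear_combination (c*e)*htwo

lemma span_pair_finrank' (u v : Fin 4 → K)
    (h : LinearIndependent K ![u,v]) :
    Module.finrank K (span K ({u,v} : Set (Fin 4 → K))) = 2 := by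
  have hr : Set.range ![u,v] = {u,v} := by
    ext z; simp [Fin.exists_fin_two, eq_comm, Set.mem_insert_iff, or_comm]
  have := finrank_span_eq_card h
  rw [hr] at this; simpa using this

lemma aux_rank (c a b d e : K) (hkey : c*c = a*e + b*d)
    (hne : ¬(a = 0 ∧ b = 0 ∧ d = 0 ∧ e = 0)) :
    Module.finrank K
      (span K ({![0,c,a,b], ![c,0,d,e], ![a,d,0,c], ![b,e,c,0]} : Set (Fin 4 → K))) = 2 := by
  have htwo : (2:K) = 0 := CharTwo.two_eq_zero
  by_cases hc : c = 0
  · subst hc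
    have hae : a * e = b * d := by linear_combination -hkey - (b*d)*htwo
    push_neg at hne
    have key : ∀ u v : Fin 4 → K, LinearIndependent K ![u,v] →
        span K ({![0,0,a,b], ![0,0,d,e], ![a,d,0,0], ![b,e,0,0]} : Set (Fin 4 → K))
          = span K {u,v} →
        Module.finrank K
          (span K ({![0,0,a,b], ![0,0,d,e], ![a,d,0,0], ![b,e,0,0]} : Set (Fin 4 → K))) = 2 := by
      intro u v hli hsp; rw [hsp]; exact span_pair_finrank' u v hli
    by_cases hA : a = 0
    · by_cases hB : b = 0
      · by_cases hD : d = 0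
        · -- e ≠ 0 : u = p2, v = p4
          have hE : e ≠ 0 := hne hA hB hD
          apply key ![0,0,d,e] ![b,e,0,0]
          · rw [LinearIndependent.pair_iff]
            intro s t hst
            have h1 := congrFun hst 1
            have h3 := congrFun hst 3
            simp [mul_eq_zero] at h1 h3
            exact ⟨by tauto, by tauto⟩
          · apply le_antisymm
            · rw [span_le]; intro p hp
              simp only [Set.mem_insert_iff, Set.mem_singleton_iff] at hp
              rcases hp with rfl|rfl|rfl|rfl
              · rw [SetLike.mem_coe, mem_span_pair]
                exact ⟨b/e, 0, by funext i; fin_cases i <;> simp <;> field_simp <;>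
                  first | ring1 | linear_combination hae | linear_combination -hae⟩
              · exact subset_span (by left; rfl)
              · rw [SetLike.mem_coe, mem_span_pair]
                exact ⟨0, d/e, by funext i; fin_cases i <;> simp <;> field_simp <;>
                  first | ring1 | linear_combination hae | linear_combination -hae⟩
              · exact subset_span (by right; rfl)
            · apply span_mono; intro z hz
              simp only [Set.mem_insert_iff, Set.mem_singleton_iff] at hz
              rcases hz with rfl|rfl
              · right; left; rfl
              · right; right; right; rfl
        · -- d ≠ 0 : u = p2, v = p3
          apply key ![0,0,d,e] ![a,d,0,0]
          · rw [LinearIndependent.pair_iff]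
            intro s t hst
            have h1 := congrFun hst 1
            have h2 := congrFun hst 2
            simp [mul_eq_zero] at h1 h2
            exact ⟨by tauto, by tauto⟩
          · apply le_antisymm
            · rw [span_le]; intro p hp
              simp only [Set.mem_insert_iff, Set.mem_singleton_iff] at hp
              rcases hp with rfl|rfl|rfl|rfl
              · rw [SetLike.mem_coe, mem_span_pair]
                exact ⟨a/d, 0, by funext i; fin_cases i <;> simp <;> field_simp <;>
                  first | ring1 | linear_combination hae | linear_combination -hae⟩
              · exact subset_span (by left; rfl)
              · exact subset_span (by right; rfl)
              · rw [SetLike.mem_coe, mem_span_pair]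
                exact ⟨0, e/d, by funext i; fin_cases i <;> simp <;> field_simp <;>
                  first | ring1 | linear_combination hae | linear_combination -hae⟩
            · apply span_mono; intro z hz
              simp only [Set.mem_insert_iff, Set.mem_singleton_iff] at hz
              rcases hz with rfl|rfl
              · right; left; rfl
              · right; right; left; rfl
      · -- b ≠ 0 : u = p1, v = p4
        apply key ![0,0,a,b] ![b,e,0,0]
        · rw [LinearIndependent.pair_iff]
          intro s t hst
          have h0 := congrFun hst 0
          have h3 := congrFun hst 3
          simp [mul_eq_zero] at h0 h3
          exact ⟨by tauto, by tauto⟩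
        · apply le_antisymm
          · rw [span_le]; intro p hp
            simp only [Set.mem_insert_iff, Set.mem_singleton_iff] at hp
            rcases hp with rfl|rfl|rfl|rfl
            · exact subset_span (by left; rfl)
            · rw [SetLike.mem_coe, mem_span_pair]
              exact ⟨e/b, 0, by funext i; fin_cases i <;> simp <;> field_simp <;>
                first | ring1 | linear_combination hae | linear_combination -hae⟩
            · rw [SetLike.mem_coe, mem_span_pair]
              exact ⟨0, a/b, by funext i; fin_cases i <;> simp <;> field_simp <;>
                first | ring1 | linear_combination hae | linear_combination -hae⟩
            · exact subset_span (by right; rfl)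
          · apply span_mono; intro z hz
            simp only [Set.mem_insert_iff, Set.mem_singleton_iff] at hz
            rcases hz with rfl|rfl
            · left; rfl
            · right; right; right; rfl
    · -- a ≠ 0 : u = p1, v = p3
      apply key ![0,0,a,b] ![a,d,0,0]
      · rw [LinearIndependent.pair_iff]
        intro s t hst
        have h0 := congrFun hst 0
        have h2 := congrFun hst 2
        simp [mul_eq_zero] at h0 h2
        exact ⟨by tauto, by tauto⟩
      · apply le_antisymm
        · rw [span_le]; intro p hp
          simp only [Set.mem_insert_iff, Set.mem_singleton_iff] at hp
          rcases hp with rfl|rfl|rfl|rfl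
          · exact subset_span (by left; rfl)
          · rw [SetLike.mem_coe, mem_span_pair]
            exact ⟨d/a, 0, by funext i; fin_cases i <;> simp <;> field_simp <;>
              first | ring1 | linear_combination hae | linear_combination -hae⟩
          · exact subset_span (by right; rfl)
          · rw [SetLike.mem_coe, mem_span_pair]
            exact ⟨0, b/a, by funext i; fin_cases i <;> simp <;> field_simp <;>
              first | ring1 | linear_combination hae | linear_combination -hae⟩
        · apply span_mono; intro z hz
          simp only [Set.mem_insert_iff, Set.mem_singleton_iff] at hz
          rcases hz with rfl|rfl
          · left; rfl
          · right; right; left; rfl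
  · -- c ≠ 0 : u = p1, v = p2
    have hsp : span K ({![0,c,a,b], ![c,0,d,e], ![a,d,0,c], ![b,e,c,0]} : Set (Fin 4 → K))
        = span K {![0,c,a,b], ![c,0,d,e]} := by
      apply le_antisymm
      · rw [span_le]; intro p hp
        simp only [Set.mem_insert_iff, Set.mem_singleton_iff] at hp
        rcases hp with rfl|rfl|rfl|rfl
        · exact subset_span (by left; rfl)
        · exact subset_span (by right; rfl)
        · rw [SetLike.mem_coe, mem_span_pair]
          exact ⟨d/c, a/c, by funext i; fin_cases i <;> simp <;> field_simp <;>
            (first | ring1 | linear_combination hkey | linear_combination -hkey | linear_combination (a*d)*htwo | linear_combination (b*e)*htwo)⟩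
        · rw [SetLike.mem_coe, mem_span_pair]
          exact ⟨e/c, b/c, by funext i; fin_cases i <;> simp <;> field_simp <;>
            (first | ring1 | linear_combination hkey | linear_combination -hkey | linear_combination (a*d)*htwo | linear_combination (b*e)*htwo)⟩
      · apply span_mono; intro z hz
        simp only [Set.mem_insert_iff, Set.mem_singleton_iff] at hz
        rcases hz with rfl|rfl
        · left; rfl
        · right; left; rfl
    rw [hsp]
    apply span_pair_finrank'
    rw [LinearIndependent.pair_iff]
    intro s t hst
    have h0 := congrFun hst 0
    have h1 := congrFun hst 1
    simp [mul_eq_zero] at h0 h1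
    exact ⟨by tauto, by tauto⟩

end Aux

theorem polarGens_isotropic_and_rank_two (n : ℕ) (hn : 1 ≤ n)
    (x : Fin 4 → F n) (hx : x ≠ 0) :
    (∀ p ∈ polarGens n x, ∀ p' ∈ polarGens n x, Bform n p p' = 0) ∧
    Module.finrank (F n) (polarSpan n x) = 2 := by
  haveI : CharP (F n) 2 := inferInstance
  set c : F n := (x 0 * x 1 + x 2 * x 3) ^ 2 ^ n with hcdef
  set a : F n := x 0 ^ om n with hadef
  set e : F n := x 1 ^ om n with hedef
  set b : F n := x 2 ^ om n with hbdef
  set d : F n := x 3 ^ om n with hddef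
  have hkey : c * c = a * e + b * d := by
    rw [hcdef, hadef, hbdef, hddef, hedef, om, ← pow_add]
    have h1 : 2 ^ n + 2 ^ n = 2 ^ (n + 1) := by ring
    rw [h1, add_pow_char_pow, mul_pow, mul_pow]
  have hset : polarGens n x
      = ({![0,c,a,b], ![c,0,d,e], ![a,d,0,c], ![b,e,c,0]} : Set (Fin 4 → F n)) := rfl
  constructor
  · intro p hp p' hp'
    rw [hset] at hp hp'
    exact aux_isotropic c a b d e hkey p hp p' hp'
  · have hne : ¬(a = 0 ∧ b = 0 ∧ d = 0 ∧ e = 0) := by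
      rintro ⟨hA, hB, hD, hE⟩
      have hom : om n ≠ 0 := by rw [om]; positivity
      apply hx
      funext i
      fin_cases i
      · exact (pow_eq_zero_iff hom).mp hA
      · exact (pow_eq_zero_iff hom).mp hE
      · exact (pow_eq_zero_iff hom).mp hB
      · exact (pow_eq_zero_iff hom).mp hD
    rw [polarSpan, hset]
    exact aux_rank c a b d e hkey hne
end
end

section
/- The orbit of the projective point [1,0,0,0] under the right action of G is exactly the set O1 = {[1, f(x,y), x, y] : x, y ∈ F}, which equals Ω \ {[0,1,0,0]} and has cardinality q^2. -/
open Matrix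

noncomputable section

/-- The point set of `PG(3,q)`. -/
abbrev PG3 (n : ℕ) : Type := Projectivization (F n) (Fin 4 → F n)

/-- The graph `A(q)`: projective points of `PG(3,q)`, with `[x]` adjacent to `[y]`
iff `[x] ≠ [y]` and `y ∈ π[x]` (equivalently, `x ∈ π[y]`, the relation being
symmetric).  Membership `y ∈ π[x]` does not depend on the choice of
representatives, so it is tested on the canonical representatives. -/
def Aq (n : ℕ) : SimpleGraph (PG3 n) where
  Adj P Q := P ≠ Q ∧ Q.rep ∈ polarSpan n P.rep ∧ P.rep ∈ polarSpan n Q.rep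
  symm := ⟨fun _ _ h => ⟨h.1.symm, h.2.2, h.2.1⟩⟩
  loopless := ⟨fun _ h => h.1 rfl⟩

/-- A vector with a coordinate equal to `1` is nonzero. -/
lemma vne {n : ℕ} (v : Fin 4 → F n) (i : Fin 4) (h : v i = 1) : v ≠ 0 := by
  intro h0; rw [h0] at h; simp at h

/-- The orbit `O1 = {[1, f(x,y), x, y] : x, y ∈ F}`. -/
def O1set (n : ℕ) : Set (PG3 n) :=
  {P | ∃ x y : F n, P = Projectivization.mk (F n) ![1, ff n x y, x, y] (vne _ 0 (by simp))}

/-- The Suzuki–Tits ovoid `Ω`. -/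
def Omega (n : ℕ) : Set (PG3 n) :=
  {Projectivization.mk (F n) ![0, 1, 0, 0] (vne _ 1 (by simp))} ∪ O1set n

/-! The first row of `M(r;a,b)` is `(1, f(a,b), a, b)`, so the orbit of `[1,0,0,0]` is the image
of the chart `(x, y) ↦ [1, f(x,y), x, y]`. Points of this chart are normalised by their first
coordinate, which makes the chart injective (hence `q²` points) and keeps `[0,1,0,0]` out of it. -/

namespace Projectivization

variable {K ι : Type*} [Field K]

theorem eq_of_mk_eq_mk_of_apply_eq_one {v w : ι → K} {hv : v ≠ 0} {hw : w ≠ 0} {i : ι}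
    (hvi : v i = 1) (hwi : w i = 1) (h : mk K v hv = mk K w hw) : v = w := by
  obtain ⟨a, rfl⟩ := (mk_eq_mk_iff' K _ _ hv hw).1 h
  obtain rfl : a = 1 := by simpa [hwi] using hvi
  exact one_smul K w

theorem mk_ne_mk_of_apply_eq_zero {v w : ι → K} {hv : v ≠ 0} {hw : w ≠ 0} {i : ι}
    (hvi : v i = 0) (hwi : w i ≠ 0) : mk K v hv ≠ mk K w hw := by
  intro h
  obtain ⟨a, rfl⟩ := (mk_eq_mk_iff K _ _ hv hw).1 h
  simp [Units.smul_def, hwi] at hvi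

end Projectivization

section Orbit

variable (n : ℕ)

lemma e0_vecMul_Mmat (r a b : F n) :
    (![1, 0, 0, 0] : Fin 4 → F n) ᵥ* Mmat n r a b = ![1, ff n a b, a, b] := by
  funext i
  fin_cases i <;> simp [Mmat, vecMul, dotProduct, Fin.sum_univ_four]

def o1Point (p : F n × F n) : PG3 n :=
  Projectivization.mk (F n) ![1, ff n p.1 p.2, p.1, p.2] (vne _ 0 (by simp))

lemma range_o1Point : Set.range (o1Point n) = O1set n := by
  ext P
  constructor
  · rintro ⟨⟨x, y⟩, rfl⟩
    exact ⟨x, y, rfl⟩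
  · rintro ⟨x, y, rfl⟩
    exact ⟨(x, y), rfl⟩

lemma o1Point_injective : Function.Injective (o1Point n) := by
  rintro ⟨x, y⟩ ⟨x', y'⟩ h
  have hv := Projectivization.eq_of_mk_eq_mk_of_apply_eq_one (i := 0) rfl rfl h
  simp only [Prod.mk.injEq]
  exact ⟨congrFun hv 2, congrFun hv 3⟩

lemma orbit_e0_eq_O1set :
    {P : PG3 n | ∃ r a b : F n, r ≠ 0 ∧
        ∃ h : (![1, 0, 0, 0] : Fin 4 → F n) ᵥ* Mmat n r a b ≠ 0,
          P = Projectivization.mk (F n) ((![1, 0, 0, 0] : Fin 4 → F n) ᵥ* Mmat n r a b) h}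
      = O1set n := by
  ext P
  constructor
  · rintro ⟨r, a, b, -, -, rfl⟩
    exact ⟨a, b, by simp only [e0_vecMul_Mmat]⟩
  · rintro ⟨x, y, rfl⟩
    refine ⟨1, x, y, one_ne_zero, by rw [e0_vecMul_Mmat]; exact vne _ 0 rfl, ?_⟩
    simp only [e0_vecMul_Mmat]

lemma e1_notMem_O1set :
    Projectivization.mk (F n) ![0, 1, 0, 0] (vne _ 1 (by simp)) ∉ O1set n := by
  rintro ⟨x, y, h⟩
  exact Projectivization.mk_ne_mk_of_apply_eq_zero (i := 0) rfl one_ne_zero h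

lemma O1set_eq_Omega_diff :
    O1set n = Omega n \ {Projectivization.mk (F n) ![0, 1, 0, 0] (vne _ 1 (by simp))} := by
  rw [Omega, Set.singleton_union, Set.insert_sdiff_self_of_notMem (e1_notMem_O1set n)]

lemma card_O1set : Nat.card (O1set n) = (2 ^ (2 * n + 1)) ^ 2 := by
  rw [← range_o1Point, Nat.card_range_of_injective (o1Point_injective n), Nat.card_prod,
    GaloisField.card 2 (2 * n + 1) (by omega), sq]

end Orbit

theorem orbit_of_e0 (n : ℕ) :
    {P : PG3 n | ∃ r a b : F n, r ≠ 0 ∧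
        ∃ h : (![1, 0, 0, 0] : Fin 4 → F n) ᵥ* Mmat n r a b ≠ 0,
          P = Projectivization.mk (F n) ((![1, 0, 0, 0] : Fin 4 → F n) ᵥ* Mmat n r a b) h}
      = O1set n ∧
    O1set n = Omega n \ {Projectivization.mk (F n) ![0, 1, 0, 0] (vne _ 1 (by simp))} ∧
    Nat.card (O1set n) = (2 ^ (2 * n + 1)) ^ 2 :=
  ⟨orbit_e0_eq_O1set n, O1set_eq_Omega_diff n, card_O1set n⟩
end
end

section
/- The projective point [0,1,0,0] is fixed by every element of G (i.e. [0,1,0,0]·M = [0,1,0,0] for all M ∈ G), and it is the unique projective point of PG(3,q) fixed by all elements of G. -/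
open Matrix

noncomputable section

theorem e1_unique_fixed_point (n : ℕ) (hn : 1 ≤ n) :
    (∀ r : F n, r ≠ 0 → ∀ a b : F n,
      ∃ t : F n, t ≠ 0 ∧
        (![0, 1, 0, 0] : Fin 4 → F n) ᵥ* Mmat n r a b = t • ![0, 1, 0, 0]) ∧
    (∀ x : Fin 4 → F n, x ≠ 0 →
      (∀ r : F n, r ≠ 0 → ∀ a b : F n,
        ∃ t : F n, t ≠ 0 ∧ x ᵥ* Mmat n r a b = t • x) →
      ∃ t : F n, t ≠ 0 ∧ x = t • ![0, 1, 0, 0]) := by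
  constructor
  · intro r hr a b
    refine ⟨r ^ (om n + 2), pow_ne_zero _ hr, ?_⟩
    funext i
    fin_cases i <;>
      simp [Mmat, ff, Matrix.vecMul, dotProduct, Fin.sum_univ_four,
        Matrix.vecHead, Matrix.vecTail]
  · intro x hx h
    obtain ⟨t, ht, heq⟩ := h 1 one_ne_zero 1 0
    have hom : (0 : F n) ^ om n = 0 := zero_pow (by simp [om])
    have h0 := congrFun heq 0
    have h1 := congrFun heq 1
    have h2 := congrFun heq 2
    have h3 := congrFun heq 3
    simp [Mmat, ff, Matrix.vecMul, dotProduct, Fin.sum_univ_four,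
      Matrix.vecHead, Matrix.vecTail, hom] at h0 h1 h2 h3
    have ht1 : ∀ y : F n, y ≠ 0 → y = t * y → t = 1 := by
      intro y hy hyt
      exact mul_right_cancel₀ hy (hyt.symm.trans (one_mul y).symm)
    have hx0 : x 0 = 0 := by
      by_contra h'
      rw [ht1 (x 0) h' h0, one_mul] at h2
      exact h' (add_eq_right.mp h2)
    rw [hx0, zero_add] at h1 h2
    have hx2 : x 2 = 0 := by
      by_contra h'
      rw [ht1 (x 2) h' h2, one_mul] at h3
      exact h' (add_eq_right.mp h3)
    rw [hx2, zero_add] at h3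
    rw [hx2, add_zero] at h1
    have hx3 : x 3 = 0 := by
      by_contra h'
      rw [ht1 (x 3) h' h3, one_mul] at h1
      exact h' (add_eq_left.mp h1)
    have hx1 : x 1 ≠ 0 := by
      intro h'
      apply hx
      funext i
      fin_cases i <;> simp [hx0, h', hx2, hx3]
    refine ⟨x 1, hx1, ?_⟩
    funext i
    fin_cases i <;> simp [hx0, hx2, hx3]
end
end

section
/- The map x ↦ x^(ω+2) is a bijection of F. Moreover, for r ∈ F^* and a, b ∈ F, the projective point [1,1,0,0]·M(r;a,b) is of the form [1, x, x, 1] with x ≠ 1 if and only if b = 1 and a^(ω+2) + r^(ω+2) = 1; consequently, for each r ∈ F^* there is a unique a = a(r) ∈ F with a(r)^(ω+2) = 1 + r^(ω+2), this a(r) satisfies a(r) ≠ 1, and [1,1,0,0]·M(r;a(r),1) = [1, a(r), a(r), 1]. -/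
open Matrix

noncomputable section

/-! The power map `x ↦ x ^ (ω + 2)` is invertible on `F*` because `ω + 2` is a unit modulo
`q - 1`, with explicit inverse `2 ^ (2n) (2 ^ (2n+1) - 2 ^ (n+1) + 1)`. The point
`[1,1,0,0] · M(r;a,b)` is the first row plus the second, `(1, f(a,b) + r^(ω+2), a, b)`; being of
the form `[1,x,x,1]` forces `b = 1`, `x = a` and `f(a,1) + r^(ω+2) = a`, which in characteristic
two is `a^(ω+2) + r^(ω+2) = 1`. -/

theorem pow_left_bijective_of_coprime {G₀ : Type*} [GroupWithZero G₀] {k : ℕ}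
    (hcop : (Nat.card G₀ - 1).Coprime k) (hk : k ≠ 0) :
    Function.Bijective (fun x : G₀ => x ^ k) := by
  have hunits : Function.Bijective (fun u : G₀ˣ => u ^ k) :=
    Nat.Coprime.pow_left_bijective (by rwa [Nat.card_units])
  refine ⟨fun x y hxy => ?_, fun y => ?_⟩
  · simp only at hxy
    rcases eq_or_ne x 0 with rfl | hx
    · exact ((pow_eq_zero_iff hk).mp (hxy.symm.trans (zero_pow hk))).symm
    rcases eq_or_ne y 0 with rfl | hy
    · exact (pow_eq_zero_iff hk).mp (hxy.trans (zero_pow hk))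
    have := hunits.injective (a₁ := Units.mk0 x hx) (a₂ := Units.mk0 y hy) (Units.ext (by simpa))
    exact congrArg Units.val this
  · rcases eq_or_ne y 0 with rfl | hy
    · exact ⟨0, zero_pow hk⟩
    obtain ⟨u, hu⟩ := hunits.surjective (Units.mk0 y hy)
    exact ⟨u, by simpa using congrArg Units.val hu⟩

theorem card_sub_one_coprime_om_add_two (n : ℕ) : (Nat.card (F n) - 1).Coprime (om n + 2) := by
  rw [GaloisField.card 2 _ (by omega)]
  refine (Nat.coprime_of_mul_modEq_one (2 ^ (2 * n) * (2 ^ (2 * n + 1) - 2 ^ (n + 1) + 1)) ?_).symm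
  have h1 : 2 ^ (n + 1) ≤ 2 ^ (2 * n + 1) := Nat.pow_le_pow_right (by norm_num) (by omega)
  have h2 : 1 ≤ 2 ^ (2 * n + 1) := Nat.one_le_two_pow
  have key : (om n + 2) * (2 ^ (2 * n) * (2 ^ (2 * n + 1) - 2 ^ (n + 1) + 1))
      = (2 ^ (3 * n + 1) + 1) * (2 ^ (2 * n + 1) - 1) + 1 := by
    unfold om
    zify [h1, h2]
    ring
  rw [key, Nat.ModEq, Nat.mul_add_mod']

theorem om_add_two_pow_bijective (n : ℕ) : Function.Bijective (fun x : F n => x ^ (om n + 2)) :=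
  pow_left_bijective_of_coprime (card_sub_one_coprime_om_add_two n) (by omega)

theorem ne_one_of_pow_add_pow_eq_one {R : Type*} [Ring R] [NoZeroDivisors R] {a r : R} {k : ℕ}
    (hr : r ≠ 0) (h : a ^ k + r ^ k = 1) : a ≠ 1 := by
  rintro rfl
  rw [one_pow, add_eq_left] at h
  exact hr (eq_zero_of_pow_eq_zero h)

theorem vecMul_Mmat (n : ℕ) (r a b : F n) :
    (![1, 1, 0, 0] : Fin 4 → F n) ᵥ* Mmat n r a b = ![1, ff n a b + r ^ (om n + 2), a, b] := by
  ext i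
  fin_cases i <;> simp [Mmat, vecMul, dotProduct, Fin.sum_univ_four]

theorem ff_one_add_eq_self_iff {n : ℕ} {a s : F n} :
    ff n a 1 + s = a ↔ a ^ (om n + 2) + s = 1 := by
  have h2 : (2 : F n) = 0 := CharTwo.two_eq_zero
  rw [ff, one_pow, mul_one]
  constructor <;> intro h
  · linear_combination h - h2
  · linear_combination h + h2

theorem vecMul_Mmat_one {n : ℕ} {r a : F n} (h : a ^ (om n + 2) + r ^ (om n + 2) = 1) :
    (![1, 1, 0, 0] : Fin 4 → F n) ᵥ* Mmat n r a 1 = ![1, a, a, 1] := by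
  rw [vecMul_Mmat, ff_one_add_eq_self_iff.mpr h]

theorem exists_vecMul_Mmat_eq_smul_iff {n : ℕ} {r : F n} (hr : r ≠ 0) (a b : F n) :
    (∃ x : F n, x ≠ 1 ∧ ∃ t : F n, t ≠ 0 ∧
        (![1, 1, 0, 0] : Fin 4 → F n) ᵥ* Mmat n r a b = t • ![1, x, x, 1]) ↔
      b = 1 ∧ a ^ (om n + 2) + r ^ (om n + 2) = 1 := by
  constructor
  · rintro ⟨x, -, t, -, heq⟩
    rw [vecMul_Mmat] at heq
    have h0 := congrFun heq 0
    have h1 := congrFun heq 1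
    have h2 := congrFun heq 2
    have h3 := congrFun heq 3
    simp only [Fin.isValue, cons_val, Pi.smul_apply, smul_eq_mul, mul_one] at h0 h1 h2 h3
    subst h0 h3
    rw [one_mul] at h1 h2
    subst h2
    exact ⟨rfl, ff_one_add_eq_self_iff.mp h1⟩
  · rintro ⟨rfl, h⟩
    exact ⟨a, ne_one_of_pow_add_pow_eq_one hr h, 1, one_ne_zero, by rw [vecMul_Mmat_one h, one_smul]⟩

theorem generator_characterisation_general (n : ℕ) :
    Function.Bijective (fun x : F n => x ^ (om n + 2)) ∧
    (∀ r : F n, r ≠ 0 → ∀ a b : F n,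
      ((∃ x : F n, x ≠ 1 ∧ ∃ t : F n, t ≠ 0 ∧
          (![1, 1, 0, 0] : Fin 4 → F n) ᵥ* Mmat n r a b = t • ![1, x, x, 1]) ↔
        (b = 1 ∧ a ^ (om n + 2) + r ^ (om n + 2) = 1))) ∧
    (∀ r : F n, r ≠ 0 →
      (∃! a : F n, a ^ (om n + 2) = 1 + r ^ (om n + 2)) ∧
      ∀ a : F n, a ^ (om n + 2) = 1 + r ^ (om n + 2) →
        a ≠ 1 ∧ ∃ t : F n, t ≠ 0 ∧
          (![1, 1, 0, 0] : Fin 4 → F n) ᵥ* Mmat n r a 1 = t • ![1, a, a, 1]) := by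
  refine ⟨om_add_two_pow_bijective n, fun r hr => exists_vecMul_Mmat_eq_smul_iff hr,
    fun r hr => ⟨(om_add_two_pow_bijective n).existsUnique _, fun a ha => ?_⟩⟩
  have h : a ^ (om n + 2) + r ^ (om n + 2) = 1 := by rw [ha, CharTwo.add_cancel_right]
  exact ⟨ne_one_of_pow_add_pow_eq_one hr h, 1, one_ne_zero, by rw [vecMul_Mmat_one h, one_smul]⟩

theorem generator_characterisation (n : ℕ) (hn : 1 ≤ n) :
    Function.Bijective (fun x : F n => x ^ (om n + 2)) ∧
    (∀ r : F n, r ≠ 0 → ∀ a b : F n,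
      ((∃ x : F n, x ≠ 1 ∧ ∃ t : F n, t ≠ 0 ∧
          (![1, 1, 0, 0] : Fin 4 → F n) ᵥ* Mmat n r a b = t • ![1, x, x, 1]) ↔
        (b = 1 ∧ a ^ (om n + 2) + r ^ (om n + 2) = 1))) ∧
    (∀ r : F n, r ≠ 0 →
      (∃! a : F n, a ^ (om n + 2) = 1 + r ^ (om n + 2)) ∧
      ∀ a : F n, a ^ (om n + 2) = 1 + r ^ (om n + 2) →
        a ≠ 1 ∧ ∃ t : F n, t ≠ 0 ∧
          (![1, 1, 0, 0] : Fin 4 → F n) ᵥ* Mmat n r a 1 = t • ![1, a, a, 1]) :=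
  generator_characterisation_general n
end
end
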